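/- arXiv:1602.06458 — 7 statements merged into one kernel-verified Lean document; each statement's English description precedes it below -/
import Mathlib

section
/- Let Q be a monotone Boolean query, D = D^n ∪ D^x with D ⊨ Q. Define an abductive diagnosis as a subset-minimal Δ ⊆ D^n such that D^x ∪ Δ ⊨ Q. Then τ ∈ D^n is an actual cause for Q in D if and only if τ belongs to at least one abductive diagnosis (τ is relevant). -/
lemma stmt1_aux {α : Type*} [DecidableEq α] (Q : Finset α → Prop) (Dx : Finset α) :
    ∀ S : Finset α, Q (Dx ∪ S) →
      ∃ Δ ⊆ S, Q (Dx ∪ Δ) ∧ ∀ Δ' ⊂ Δ, ¬ Q (Dx ∪ Δ') := by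
  intro S
  induction S using Finset.strongInduction with
  | _ S ih =>
    intro hQ
    by_cases h : ∀ Δ' ⊂ S, ¬ Q (Dx ∪ Δ')
    · exact ⟨S, subset_rfl, hQ, h⟩
    · push_neg at h
      obtain ⟨Δ', hΔ', hQ'⟩ := h
      obtain ⟨Δ, hsub, hq, hmin⟩ := ih Δ' hΔ' hQ'
      exact ⟨Δ, hsub.trans hΔ'.subset, hq, hmin⟩

lemma stmt1_diff {α : Type*} [DecidableEq α] {Dn Dx Γ : Finset α}
    (hdisj : Disjoint Dn Dx) (hΓ : Γ ⊆ Dn) :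
    (Dn ∪ Dx) \ Γ = Dx ∪ (Dn \ Γ) := by
  ext x
  simp only [Finset.mem_sdiff, Finset.mem_union]
  have h1 : x ∈ Γ → x ∈ Dn := fun h => hΓ h
  have h2 : x ∈ Dn → x ∉ Dx := fun h => Finset.disjoint_left.mp hdisj h
  tauto

/-- τ is an actual cause iff τ belongs to some abductive diagnosis. -/
theorem stmt1 {α : Type*} [DecidableEq α] (Q : Finset α → Prop)
    (mono : ∀ A B : Finset α, A ⊆ B → Q A → Q B)
    (D Dn Dx : Finset α) (hpart : D = Dn ∪ Dx) (hdisj : Disjoint Dn Dx)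
    (hQ : Q D) (τ : α) (hτ : τ ∈ Dn) :
    (∃ Γ ⊆ Dn, Q (D \ Γ) ∧ ¬ Q (D \ (Γ ∪ {τ}))) ↔
    (∃ Δ : Finset α, Δ ⊆ Dn ∧ Q (Dx ∪ Δ) ∧
      (∀ Δ' : Finset α, Δ' ⊂ Δ → ¬ Q (Dx ∪ Δ')) ∧ τ ∈ Δ) := by
  subst hpart
  constructor
  · rintro ⟨Γ, hΓ, hQ1, hQ2⟩
    have e1 : (Dn ∪ Dx) \ Γ = Dx ∪ (Dn \ Γ) := stmt1_diff hdisj hΓ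
    have e2 : (Dn ∪ Dx) \ (Γ ∪ {τ}) = Dx ∪ (Dn \ (Γ ∪ {τ})) :=
      stmt1_diff hdisj (Finset.union_subset hΓ (Finset.singleton_subset_iff.mpr hτ))
    rw [e1] at hQ1
    rw [e2] at hQ2
    obtain ⟨Δ, hsub, hq, hmin⟩ := stmt1_aux Q Dx (Dn \ Γ) hQ1
    refine ⟨Δ, hsub.trans (Finset.sdiff_subset), hq, hmin, ?_⟩
    by_contra hτΔ
    apply hQ2
    apply mono (Dx ∪ Δ) _ _ hq
    apply Finset.union_subset_union_right
    intro x hx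
    have hx' := hsub hx
    simp only [Finset.mem_sdiff, Finset.mem_union, Finset.mem_singleton] at hx' ⊢
    exact ⟨hx'.1, fun h => h.elim hx'.2 (fun he => hτΔ (he ▸ hx))⟩
  · rintro ⟨Δ, hΔ, hq, hmin, hτΔ⟩
    refine ⟨Dn \ Δ, Finset.sdiff_subset, ?_, ?_⟩
    · have e1 : (Dn ∪ Dx) \ (Dn \ Δ) = Dx ∪ (Dn \ (Dn \ Δ)) :=
        stmt1_diff hdisj Finset.sdiff_subset
      rw [e1, Finset.sdiff_sdiff_self_left, Finset.inter_eq_right.mpr hΔ]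
      exact hq
    · intro hcon
      apply hmin (Δ \ {τ}) (Finset.sdiff_ssubset (Finset.singleton_subset_iff.mpr hτΔ) (Finset.singleton_nonempty τ))
      apply mono _ _ _ hcon
      intro x hx
      simp only [Finset.mem_sdiff, Finset.mem_union, Finset.mem_singleton] at hx ⊢
      tauto
end

section
/- Let Q be a monotone Boolean query, D = D^n ∪ D^x with D ⊨ Q. Then τ ∈ D^n is a counterfactual cause for Q (i.e., D \ {τ} ⊭ Q) if and only if τ belongs to every abductive diagnosis (τ is necessary). -/
lemma exists_min_aux {α : Type*} [DecidableEq α] (Q : Finset α → Prop)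
    (Dx : Finset α) :
    ∀ n (S : Finset α), S.card = n → Q (Dx ∪ S) →
      ∃ Δ, Δ ⊆ S ∧ Q (Dx ∪ Δ) ∧ ∀ Δ' : Finset α, Δ' ⊂ Δ → ¬ Q (Dx ∪ Δ') := by
  intro n
  induction n using Nat.strong_induction_on with
  | _ n ih =>
    intro S hcard hQ
    by_cases h : ∀ Δ' : Finset α, Δ' ⊂ S → ¬ Q (Dx ∪ Δ')
    · exact ⟨S, subset_rfl, hQ, h⟩
    · push_neg at h
      obtain ⟨Δ', hsub, hQ'⟩ := h
      obtain ⟨Δ, h1, h2, h3⟩ := ih Δ'.card (hcard ▸ Finset.card_lt_card hsub) Δ' rfl hQ'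
      exact ⟨Δ, h1.trans hsub.subset, h2, h3⟩

/-- τ is a counterfactual cause iff τ belongs to every abductive diagnosis. -/
theorem stmt2 {α : Type*} [DecidableEq α] (Q : Finset α → Prop)
    (mono : ∀ A B : Finset α, A ⊆ B → Q A → Q B)
    (D Dn Dx : Finset α) (hpart : D = Dn ∪ Dx) (hdisj : Disjoint Dn Dx)
    (hQ : Q D) (τ : α) (hτ : τ ∈ Dn) :
    (¬ Q (D \ {τ})) ↔
    (∀ Δ : Finset α, Δ ⊆ Dn → Q (Dx ∪ Δ) →
      (∀ Δ' : Finset α, Δ' ⊂ Δ → ¬ Q (Dx ∪ Δ')) → τ ∈ Δ) := by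
  constructor
  · intro hcf Δ hΔ hQΔ _
    by_contra hτΔ
    apply hcf
    apply mono (Dx ∪ Δ) _ _ hQΔ
    intro x hx
    rw [Finset.mem_union] at hx
    rw [Finset.mem_sdiff, hpart, Finset.mem_union, Finset.mem_singleton]
    rcases hx with hx | hx
    · refine ⟨Or.inr hx, fun he => ?_⟩
      have : τ ∈ Dn ⊓ Dx := Finset.mem_inter.mpr ⟨hτ, he ▸ hx⟩
      simpa using hdisj.le_bot this
    · exact ⟨Or.inl (hΔ hx), fun he => hτΔ (he ▸ hx)⟩
  · intro hnec
    intro hQ'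
    have hsub : D \ {τ} ⊆ Dx ∪ (Dn \ {τ}) := by
      intro x hx
      rw [Finset.mem_sdiff, hpart, Finset.mem_union] at hx
      rcases hx with ⟨hx1 | hx1, hx2⟩
      · exact Finset.mem_union_right _ (Finset.mem_sdiff.mpr ⟨hx1, hx2⟩)
      · exact Finset.mem_union_left _ hx1
    have hQ2 : Q (Dx ∪ (Dn \ {τ})) := mono _ _ hsub hQ'
    obtain ⟨Δ, h1, h2, h3⟩ := exists_min_aux Q Dx (Dn \ {τ}).card (Dn \ {τ}) rfl hQ2
    have := hnec Δ (h1.trans (Finset.sdiff_subset)) h2 h3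
    have := Finset.mem_sdiff.mp (h1 this)
    simp at this
end

section
/- For a monotone query Q with Q(D) = {ā₁,…,āₙ} and āₖ ∈ Q(D), there is a solution to the view-side-effect-free deletion problem for āₖ (i.e., there exists D' ⊆ D with Q(D') = Q(D) \ {āₖ}) if and only if the set of view-conditioned actual causes for āₖ is nonempty. -/
/-- a view-side-effect-free deletion exists iff there is a vc-actual cause. -/
theorem stmt4 {α β : Type*} [DecidableEq α] [DecidableEq β]
    (Q : Finset α → Finset β)
    (mono : ∀ A B : Finset α, A ⊆ B → Q A ⊆ Q B)
    (D : Finset α) (a : β) (ha : a ∈ Q D) :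
    (∃ D' ⊆ D, Q D' = Q D \ {a}) ↔
    (∃ τ ∈ D, ∃ Γ ⊆ D, τ ∉ Γ ∧
      Q (D \ (Γ ∪ {τ})) = Q D \ {a} ∧
      a ∈ Q (D \ Γ) ∧ Q (D \ Γ) = Q D) := by
  constructor
  · rintro ⟨D', hD'sub, hD'⟩
    classical
    -- pick a maximal-cardinality S ⊆ D with Q S = Q D \ {a}
    set P : Finset (Finset α) := D.powerset.filter (fun S => Q S = Q D \ {a}) with hP
    have hne : P.Nonempty := ⟨D', by simp [hP, Finset.mem_powerset, hD'sub, hD']⟩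
    obtain ⟨S, hSP, hSmax⟩ := P.exists_max_image Finset.card hne
    have hSsub : S ⊆ D := by
      have := hSP; simp [hP, Finset.mem_powerset] at this; exact this.1
    have hSQ : Q S = Q D \ {a} := by
      have := hSP; simp [hP, Finset.mem_powerset] at this; exact this.2
    have haS : a ∉ Q S := by rw [hSQ]; simp
    have hSne : S ≠ D := by rintro rfl; exact haS ha
    obtain ⟨τ, hτD, hτS⟩ : ∃ τ ∈ D, τ ∉ S := by
      by_contra h
      push_neg at h
      exact hSne (Finset.Subset.antisymm hSsub h)
    refine ⟨τ, hτD, (D \ S) \ {τ}, by intro x hx; simp at hx; exact hx.1.1, by simp, ?_, ?_, ?_⟩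
    · have h1 : D \ (((D \ S) \ {τ}) ∪ {τ}) = S := by
        ext x
        by_cases hx : x = τ
        · subst hx; simp [hτS]
        · simp only [Finset.mem_sdiff, Finset.mem_union, Finset.mem_singleton, hx]
          have := @hSsub x
          tauto
      rw [h1, hSQ]
    · -- a ∈ Q (D \ Γ) where D \ Γ = insert τ S
      have h2 : D \ ((D \ S) \ {τ}) = insert τ S := by
        ext x
        by_cases hx : x = τ
        · subst hx; simp [hτD, hτS]
        · simp only [Finset.mem_sdiff, Finset.mem_singleton, Finset.mem_insert, hx]
          have := @hSsub x
          tauto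
      rw [h2]
      by_contra haT
      -- then insert τ S would also satisfy the predicate, contradicting maximality
      have hQT : Q (insert τ S) = Q D \ {a} := by
        apply Finset.Subset.antisymm
        · intro y hy
          have hyD : y ∈ Q D := mono _ D (by
            intro x hx; rcases Finset.mem_insert.mp hx with rfl | h
            · exact hτD
            · exact hSsub h) hy
          simp only [Finset.mem_sdiff, Finset.mem_singleton]
          exact ⟨hyD, fun h => haT (h ▸ hy)⟩
        · rw [← hSQ]; exact mono _ _ (Finset.subset_insert _ _)
      have hmem : insert τ S ∈ P := by
        simp only [hP, Finset.mem_filter, Finset.mem_powerset]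
        exact ⟨Finset.insert_subset hτD hSsub, hQT⟩
      have := hSmax _ hmem
      rw [Finset.card_insert_of_notMem hτS] at this
      omega
    · -- Q (D \ Γ) = Q D, given a ∈ Q (D \ Γ)  — redo: we need it fresh here
      have h2 : D \ ((D \ S) \ {τ}) = insert τ S := by
        ext x
        by_cases hx : x = τ
        · subst hx; simp [hτD, hτS]
        · simp only [Finset.mem_sdiff, Finset.mem_singleton, Finset.mem_insert, hx]
          have := @hSsub x
          tauto
      rw [h2]
      have haT : a ∈ Q (insert τ S) := by
        by_contra haT
        have hQT : Q (insert τ S) = Q D \ {a} := by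
          apply Finset.Subset.antisymm
          · intro y hy
            have hyD : y ∈ Q D := mono _ D (by
              intro x hx; rcases Finset.mem_insert.mp hx with rfl | h
              · exact hτD
              · exact hSsub h) hy
            simp only [Finset.mem_sdiff, Finset.mem_singleton]
            exact ⟨hyD, fun h => haT (h ▸ hy)⟩
          · rw [← hSQ]; exact mono _ _ (Finset.subset_insert _ _)
        have hmem : insert τ S ∈ P := by
          simp only [hP, Finset.mem_filter, Finset.mem_powerset]
          exact ⟨Finset.insert_subset hτD hSsub, hQT⟩
        have := hSmax _ hmem
        rw [Finset.card_insert_of_notMem hτS] at this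
        omega
      apply Finset.Subset.antisymm
      · exact mono _ D (by
          intro x hx; rcases Finset.mem_insert.mp hx with rfl | h
          · exact hτD
          · exact hSsub h)
      · intro y hyD
        by_cases hya : y = a
        · exact hya ▸ haT
        · have : y ∈ Q S := by rw [hSQ]; simp [hyD, hya]
          exact mono _ _ (Finset.subset_insert _ _) this
  · rintro ⟨τ, _, Γ, _, _, hQ, _, _⟩
    exact ⟨D \ (Γ ∪ {τ}), Finset.sdiff_subset, hQ⟩
end

section
/- If τ ∈ D^n is an actual cause for a monotone Boolean query Q and Γ is a contingency set for τ, then there exists an abductive diagnosis Δ ⊆ D^n (subset-minimal with D^x ∪ Δ ⊨ Q) such that τ ∈ Δ and Δ ⊆ D^n \ Γ. -/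
/-- from a contingency set Γ for τ one obtains an abductive diagnosis
Δ ⊆ Dⁿ \ Γ containing τ. -/
theorem stmt12 {α : Type*} [DecidableEq α] (Q : Finset α → Prop)
    (mono : ∀ A B : Finset α, A ⊆ B → Q A → Q B)
    (D Dn Dx : Finset α) (hpart : D = Dn ∪ Dx) (hdisj : Disjoint Dn Dx)
    (τ : α) (hτ : τ ∈ Dn) (Γ : Finset α) (hΓ : Γ ⊆ Dn)
    (hcont : Q (D \ Γ) ∧ ¬ Q (D \ (Γ ∪ {τ}))) :
    ∃ Δ : Finset α, Δ ⊆ Dn ∧ Q (Dx ∪ Δ) ∧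
      (∀ Δ' : Finset α, Δ' ⊂ Δ → Δ' ⊆ Dn → ¬ Q (Dx ∪ Δ')) ∧
      τ ∈ Δ ∧ Δ ⊆ Dn \ Γ := by
  classical
  obtain ⟨hQ, hnQ⟩ := hcont
  -- D \ Γ ⊆ Dx ∪ (Dn \ Γ)
  have hsub : D \ Γ ⊆ Dx ∪ (Dn \ Γ) := by
    intro x hx
    simp only [Finset.mem_sdiff, hpart, Finset.mem_union] at hx ⊢
    rcases hx with ⟨hx1 | hx2, hxΓ⟩
    · exact Or.inr ⟨hx1, hxΓ⟩
    · exact Or.inl hx2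
  have hQ0 : Q (Dx ∪ (Dn \ Γ)) := mono _ _ hsub hQ
  -- minimal element of S
  set S : Set (Finset α) := {Δ | Δ ⊆ Dn \ Γ ∧ Q (Dx ∪ Δ)} with hS
  have hne : S.Nonempty := ⟨Dn \ Γ, Finset.Subset.refl _, hQ0⟩
  obtain ⟨Δ, hΔS, hmin⟩ := (Finset.isWellFounded_ssubset.wf).has_min S hne
  obtain ⟨hΔsub, hΔQ⟩ := hΔS
  have hΔDn : Δ ⊆ Dn := hΔsub.trans (Finset.sdiff_subset)
  -- τ ∈ Δ
  have hτΔ : τ ∈ Δ := by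
    by_contra hτn
    apply hnQ
    apply mono (Dx ∪ Δ) _ _ hΔQ
    intro x hx
    simp only [Finset.mem_union, Finset.mem_sdiff, hpart, Finset.mem_singleton] at hx ⊢
    rcases hx with hx | hx
    · refine ⟨Or.inr hx, ?_⟩
      rintro (hxΓ | rfl)
      · exact Finset.disjoint_left.mp hdisj.symm hx (hΓ hxΓ)
      · exact Finset.disjoint_left.mp hdisj.symm hx hτ
    · have := hΔsub hx
      simp only [Finset.mem_sdiff] at this
      refine ⟨Or.inl this.1, ?_⟩
      rintro (hxΓ | rfl)
      · exact this.2 hxΓ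
      · exact hτn hx
  refine ⟨Δ, hΔDn, hΔQ, ?_, hτΔ, hΔsub⟩
  intro Δ' hss _ hQ'
  exact hmin Δ' ⟨hss.subset.trans hΔsub, hQ'⟩ hss
end

section
/- For a monotone Boolean query Q with D ⊨ Q, and τ ∈ D^n: removing τ together with one of its contingency sets yields a solution to the source-side-effect deletion problem; conversely, for every Λ ⊆ D with Q(D \ Λ) false that is subset-minimal with this property, every τ ∈ Λ ∩ D^n is an actual cause for Q with contingency set Λ \ {τ}. -/
/-- correspondence between actual causes with (minimal) contingency
sets and minimal-source-side-effect deletions. -/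
theorem stmt13 {α : Type*} [DecidableEq α] (Q : Finset α → Prop)
    (mono : ∀ A B : Finset α, A ⊆ B → Q A → Q B)
    (D Dn Dx : Finset α) (hpart : D = Dn ∪ Dx) (hQ : Q D) :
    (∀ τ ∈ Dn, ∀ Γ ⊆ Dn, Q (D \ Γ) → ¬ Q (D \ (Γ ∪ {τ})) →
      (∀ Γ' : Finset α, Γ' ⊂ Γ → Q (D \ (Γ' ∪ {τ}))) →
      (¬ Q (D \ (Γ ∪ {τ})) ∧
        ∀ Λ' : Finset α, Λ' ⊂ Γ ∪ {τ} → Q (D \ Λ'))) ∧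
    (∀ Λ : Finset α, Λ ⊆ D → ¬ Q (D \ Λ) →
      (∀ Λ' : Finset α, Λ' ⊂ Λ → Q (D \ Λ')) →
      ∀ τ ∈ Λ ∩ Dn, Q (D \ (Λ \ {τ})) ∧ ¬ Q (D \ ((Λ \ {τ}) ∪ {τ}))) := by
  constructor
  · intro τ hτ Γ hΓ hQΓ hnQ hmin
    refine ⟨hnQ, ?_⟩
    intro Λ' hΛ'
    by_cases hτΛ : τ ∈ Λ'
    · have hsub : Λ' \ {τ} ⊂ Γ := by
        constructor
        · intro x hx
          simp only [Finset.mem_sdiff, Finset.mem_singleton] at hx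
          have := hΛ'.1 hx.1
          simp only [Finset.mem_union, Finset.mem_singleton] at this
          tauto
        · intro hsup
          apply hΛ'.2
          intro x hx
          simp only [Finset.mem_union, Finset.mem_singleton] at hx
          rcases hx with hx | hx
          · exact (Finset.mem_sdiff.mp (hsup hx)).1
          · exact hx ▸ hτΛ
      have := hmin _ hsub
      have heq : (Λ' \ {τ}) ∪ {τ} = Λ' := by
        ext x
        simp only [Finset.mem_union, Finset.mem_sdiff, Finset.mem_singleton]
        constructor
        · rintro (⟨h, _⟩ | h) <;> [exact h; exact h ▸ hτΛ]
        · intro h; by_cases hx : x = τ <;> tauto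
      rwa [heq] at this
    · have hsub : Λ' ⊆ Γ := by
        intro x hx
        have := hΛ'.1 hx
        simp only [Finset.mem_union, Finset.mem_singleton] at this
        rcases this with h | h
        · exact h
        · exact absurd (h ▸ hx) hτΛ
      exact mono _ _ (Finset.sdiff_subset_sdiff le_rfl hsub) hQΓ
  · intro Λ hΛD hnQ hmin τ hτ
    simp only [Finset.mem_inter] at hτ
    have hss : Λ \ {τ} ⊂ Λ :=
      Finset.sdiff_ssubset (by simpa using hτ.1) (by simp)
    refine ⟨hmin _ hss, ?_⟩
    have heq : (Λ \ {τ}) ∪ {τ} = Λ := by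
      ext x
      simp only [Finset.mem_union, Finset.mem_sdiff, Finset.mem_singleton]
      constructor
      · rintro (⟨h, _⟩ | h) <;> [exact h; exact h ▸ hτ.1]
      · intro h; by_cases hx : x = τ <;> tauto
    rwa [heq]
end

section
/- For a monotone Boolean query Q and τ ∈ D^n, ρ(τ) ≥ 1/k if and only if there exists D' with D^x ⊆ D' ⊆ D, |D \ D'| ≤ k − 1, τ ∈ D', Q(D') true, and Q(D' \ {τ}) false. -/
open Classical in
/-- The causal responsibility of τ: 1/(1+|Γ|) for a minimum-size contingency set Γ,
and 0 if τ is not an actual cause. -/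
noncomputable def resp {α : Type*} [DecidableEq α] (Q : Finset α → Prop)
    (D Dn : Finset α) (τ : α) : ℚ :=
  if (∃ Γ : Finset α, Γ ⊆ Dn ∧ Q (D \ Γ) ∧ ¬ Q (D \ (Γ ∪ {τ}))) then
    1 / (1 + ((sInf {n : ℕ | ∃ Γ : Finset α,
      Γ ⊆ Dn ∧ Q (D \ Γ) ∧ ¬ Q (D \ (Γ ∪ {τ})) ∧ Γ.card = n} : ℕ) : ℚ))
  else 0

/-- ρ(τ) ≥ 1/k iff there is D' with Dˣ ⊆ D' ⊆ D, |D \ D'| ≤ k-1,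
τ ∈ D', Q(D') true and Q(D' \ {τ}) false. -/
theorem stmt15 {α : Type*} [DecidableEq α] (Q : Finset α → Prop)
    (mono : ∀ A B : Finset α, A ⊆ B → Q A → Q B)
    (D Dn Dx : Finset α) (hpart : D = Dn ∪ Dx) (hdisj : Disjoint Dn Dx)
    (hQ : Q D) (τ : α) (hτ : τ ∈ Dn) (k : ℕ) (hk : 1 ≤ k) :
    (1 : ℚ) / k ≤ resp Q D Dn τ ↔
    (∃ D' : Finset α, Dx ⊆ D' ∧ D' ⊆ D ∧ (D \ D').card ≤ k - 1 ∧
      τ ∈ D' ∧ Q D' ∧ ¬ Q (D' \ {τ})) := by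
  classical
  have hkQ : (0:ℚ) < (k:ℚ) := by exact_mod_cast Nat.lt_of_lt_of_le Nat.zero_lt_one hk
  constructor
  · intro h
    by_cases hc : (∃ Γ : Finset α, Γ ⊆ Dn ∧ Q (D \ Γ) ∧ ¬ Q (D \ (Γ ∪ {τ})))
    · rw [resp, if_pos hc] at h
      set m := sInf {n : ℕ | ∃ Γ : Finset α,
        Γ ⊆ Dn ∧ Q (D \ Γ) ∧ ¬ Q (D \ (Γ ∪ {τ})) ∧ Γ.card = n} with hm
      obtain ⟨Γ, hΓDn, hQ1, hQ2⟩ := hc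
      have hne : {n : ℕ | ∃ Γ : Finset α,
          Γ ⊆ Dn ∧ Q (D \ Γ) ∧ ¬ Q (D \ (Γ ∪ {τ})) ∧ Γ.card = n}.Nonempty :=
        ⟨Γ.card, Γ, hΓDn, hQ1, hQ2, rfl⟩
      obtain ⟨Γ', hΓ'Dn, hQ1', hQ2', hcard⟩ := Nat.sInf_mem hne
      have hpos : (0:ℚ) < 1 + (m:ℚ) := by positivity
      have hle : (1:ℚ) + (m:ℚ) ≤ (k:ℚ) := by
        rw [div_le_div_iff₀ hkQ hpos] at h
        linarith
      have hmk : m + 1 ≤ k := by exact_mod_cast (by linarith : ((m:ℚ)+1) ≤ (k:ℚ))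
      have hτΓ' : τ ∉ Γ' := by
        intro hmem
        have : Γ' ∪ {τ} = Γ' := by
          apply Finset.union_eq_left.mpr
          simpa using hmem
        rw [this] at hQ2'
        exact hQ2' hQ1'
      refine ⟨D \ Γ', ?_, Finset.sdiff_subset, ?_, ?_, hQ1', ?_⟩
      · intro x hx
        refine Finset.mem_sdiff.mpr ⟨by rw [hpart]; exact Finset.mem_union_right _ hx, ?_⟩
        intro hxΓ
        exact (Finset.disjoint_left.mp hdisj (hΓ'Dn hxΓ)) hx
      · have hsub : D \ (D \ Γ') ⊆ Γ' := by
          intro x hx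
          obtain ⟨hxD, hxn⟩ := Finset.mem_sdiff.mp hx
          by_contra hxΓ
          exact hxn (Finset.mem_sdiff.mpr ⟨hxD, hxΓ⟩)
        have := Finset.card_le_card hsub
        omega
      · exact Finset.mem_sdiff.mpr ⟨by rw [hpart]; exact Finset.mem_union_left _ hτ, hτΓ'⟩
      · have heq : (D \ Γ') \ {τ} = D \ (Γ' ∪ {τ}) := by
          ext x; simp [and_assoc, not_or]; tauto
        rw [heq]
        exact hQ2'
    · rw [resp, if_neg hc] at h
      have : (0:ℚ) < 1 / (k:ℚ) := by positivity
      linarith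
  · rintro ⟨D', hDx, hD', hcard, hτD', hQD', hQD''⟩
    have hΓ : (D \ D') ⊆ Dn := by
      intro x hx
      obtain ⟨hxD, hxD'⟩ := Finset.mem_sdiff.mp hx
      rcases Finset.mem_union.mp (hpart ▸ hxD) with h1 | h1
      · exact h1
      · exact absurd (hDx h1) hxD'
    have hDeq : D \ (D \ D') = D' := by
      exact sdiff_sdiff_eq_self hD'
    have hDeq2 : D \ ((D \ D') ∪ {τ}) = D' \ {τ} := by
      have h2 : D \ ((D \ D') ∪ {τ}) = (D \ (D \ D')) \ {τ} := by
        ext x; simp [not_or]; tauto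
      rw [h2, hDeq]
    have hc : (∃ Γ : Finset α, Γ ⊆ Dn ∧ Q (D \ Γ) ∧ ¬ Q (D \ (Γ ∪ {τ}))) :=
      ⟨D \ D', hΓ, by rw [hDeq]; exact hQD', by rw [hDeq2]; exact hQD''⟩
    rw [resp, if_pos hc]
    set m := sInf {n : ℕ | ∃ Γ : Finset α,
      Γ ⊆ Dn ∧ Q (D \ Γ) ∧ ¬ Q (D \ (Γ ∪ {τ})) ∧ Γ.card = n} with hm
    have hmle : m ≤ (D \ D').card :=
      Nat.sInf_le ⟨D \ D', hΓ, by rw [hDeq]; exact hQD', by rw [hDeq2]; exact hQD'', rfl⟩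
    have : m + 1 ≤ k := by omega
    have hcast : (1:ℚ) + (m:ℚ) ≤ (k:ℚ) := by exact_mod_cast by omega
    have hpos : (0:ℚ) < 1 + (m:ℚ) := by positivity
    rw [div_le_div_iff₀ hkQ hpos]
    linarith
end

section
/- vc-causality is expressible as causality under integrity constraints: given a monotone query Q on instances over tuple-set T, an instance D with answers Q(D) and fixed answer āₖ ∈ Q(D), define the extended instance D' := D ∪ V₀ where V₀ := Q(D) \ {āₖ} is the (exogenous) extension of a fresh view predicate V, and the constraint Σ stating that every V-tuple is an answer to Q over the T-part (i.e., D'' ⊨ Σ iff V-part(D'') ⊆ Q(T-part(D''))). Then τ ∈ D is a vc-actual cause for āₖ in D iff τ is an actual cause for āₖ under Σ in D' (with D endogenous and V₀ exogenous). -/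
/-- vc-causality is expressible as causality under an inclusion
dependency stating that the (exogenous) view extension V₀ := Q(D) \ {āₖ} is
contained in the answers of Q over the remaining base tuples. -/
theorem stmt18 {α β : Type*} [DecidableEq α] [DecidableEq β]
    (Q : Finset α → Finset β)
    (mono : ∀ A B : Finset α, A ⊆ B → Q A ⊆ Q B)
    (D : Finset α) (ak : β) (hak : ak ∈ Q D) (τ : α) (hτ : τ ∈ D)
    (V0 : Finset β) (hV0 : V0 = Q D \ {ak}) :
    -- τ is a vc-actual cause for āₖ in D
    (∃ Γ ⊆ D, Q (D \ Γ) = Q D ∧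
      ak ∉ Q (D \ (Γ ∪ {τ})) ∧ Q (D \ (Γ ∪ {τ})) = Q D \ {ak}) ↔
    -- τ is an actual cause for āₖ under Σ in the extended instance, where
    -- satisfaction of Σ means: the V-part V₀ is contained in Q of the base part
    (∃ Γ ⊆ D, ak ∈ Q (D \ Γ) ∧ V0 ⊆ Q (D \ Γ) ∧
      ak ∉ Q (D \ (Γ ∪ {τ})) ∧ V0 ⊆ Q (D \ (Γ ∪ {τ}))) := by
  subst hV0
  constructor
  · rintro ⟨Γ, hΓ, h1, h2, h3⟩
    refine ⟨Γ, hΓ, h1 ▸ hak, ?_, h2, ?_⟩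
    · rw [h1]; exact Finset.sdiff_subset
    · rw [h3]
  · rintro ⟨Γ, hΓ, h1, h2, h3, h4⟩
    refine ⟨Γ, hΓ, ?_, h3, ?_⟩
    · apply Finset.Subset.antisymm (mono _ _ Finset.sdiff_subset)
      intro x hx
      by_cases hxa : x = ak
      · exact hxa ▸ h1
      · exact h2 (Finset.mem_sdiff.2 ⟨hx, by simp [hxa]⟩)
    · apply Finset.Subset.antisymm
      · intro x hx
        refine Finset.mem_sdiff.2 ⟨mono _ _ Finset.sdiff_subset hx, ?_⟩
        simp only [Finset.mem_singleton]
        rintro rfl; exact h3 hx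
      · exact h4
end
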